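/- arXiv:1506.07084 — 4 statements merged into one kernel-verified Lean document; each statement's English description precedes it below -/
import Mathlib

section
/- For all real p, q and nonnegative integers m, n: (2π)^{-1/2} ∫_ℝ e^{iyq} h_m(y + p/2) h_n(y - p/2) dy = (-1)^n · 2^{(m+n-1)/2} · e^{-(p²+q²)/4} · H_{m,n}((p+iq)/√2, (p-iq)/√2), where h_n(x) = e^{-x²/2} H_n(x) is the Hermite function. -/
/-!
Differentiating the integrand `e^{iyq} h_m(y + p/2) h_n(y - p/2)` with the two ladder forms
`h_k' = x h_k - h_{k+1} = 2k h_{k-1} - x h_k` of the Hermite functions and integrating over `ℝ`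
gives the recurrences `I(m+1,n) = (p+iq) I(m,n) + 2n I(m,n-1)` and
`I(m,n+1) = -(p-iq) I(m,n) + 2m I(m-1,n)` for the integrals `I(m,n)`. With `p ± iq = √2 z, √2 z̄`
these match the recurrence `H_{m+1,n+1} = z H_{m,n+1} - (n+1) H_{m,n}` of the complex Hermite
polynomials, and the base case `I(0,0)` is a Gaussian Fourier integral.
-/

open MeasureTheory Complex Real

noncomputable def Hphys (n : ℕ) (x : ℝ) : ℝ :=
  (-1 : ℝ)^n * Real.exp (x^2) * iteratedDeriv n (fun t : ℝ => Real.exp (-t^2)) x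

noncomputable def hFun (n : ℕ) (x : ℝ) : ℝ := Real.exp (-x^2/2) * Hphys n x

noncomputable def Hc (m n : ℕ) (z : ℂ) : ℂ :=
  ∑ k ∈ Finset.range (min m n + 1),
    (-1 : ℂ)^k * (Nat.factorial k : ℂ) * (Nat.choose m k : ℂ) * (Nat.choose n k : ℂ)
      * z^(m-k) * (starRingEnd ℂ z)^(n-k)

noncomputable def Lag (n α : ℕ) (x : ℂ) : ℂ :=
  ∑ k ∈ Finset.range (n + 1),
    (-1 : ℂ)^k * (Nat.choose (n + α) (n - k) : ℂ) * x^k / (Nat.factorial k : ℂ)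

open Polynomial

lemma iteratedDeriv_id_mul {𝕜 : Type*} [NontriviallyNormedField 𝕜] {f : 𝕜 → 𝕜} {x : 𝕜}
    {n : ℕ} (hf : ContDiffAt 𝕜 n f x) :
    iteratedDeriv n (fun y => y * f y) x =
      x * iteratedDeriv n f x + n * iteratedDeriv (n - 1) f x := by
  rw [show (fun y => y * f y) = id * f from rfl, iteratedDeriv_mul contDiffAt_id hf]
  rcases n with _ | n
  · simp
  · rw [Finset.sum_range_succ', Finset.sum_range_succ', Finset.sum_eq_zero]
    · simp [iteratedDeriv_id]; ring
    · intro i _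
      simp [iteratedDeriv_id]

lemma integral_eq_integral_of_hasDerivAt_sub {E : Type*} [NormedAddCommGroup E]
    [NormedSpace ℝ E] {f g h : ℝ → E} (hderiv : ∀ y, HasDerivAt f (g y - h y) y)
    (hf : Integrable f) (hg : Integrable g) (hh : Integrable h) :
    ∫ y, h y = ∫ y, g y := by
  have := integral_eq_zero_of_hasDerivAt_of_integrable hderiv (hg.sub hh) hf
  rw [integral_sub hg hh, sub_eq_zero] at this
  exact this.symm

lemma integrable_eval_mul_exp_neg_mul_sq {b : ℝ} (hb : 0 < b) (P : ℝ[X]) :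
    Integrable fun x : ℝ => P.eval x * rexp (-b * x ^ 2) := by
  simp_rw [eval_eq_sum_range, Finset.sum_mul, mul_assoc]
  refine integrable_finsetSum _ fun k _ => (Integrable.const_mul ?_ _)
  simpa using integrable_rpow_mul_exp_neg_mul_sq hb (s := k)
    (by linarith [k.cast_nonneg (α := ℝ)])

lemma contDiff_exp_neg_sq : ContDiff ℝ ⊤ (fun t : ℝ => rexp (-t ^ 2)) := by fun_prop

lemma hasDerivAt_iteratedDeriv_exp_neg_sq (n : ℕ) (x : ℝ) :
    HasDerivAt (iteratedDeriv n fun t : ℝ => rexp (-t ^ 2))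
      (iteratedDeriv (n + 1) (fun t : ℝ => rexp (-t ^ 2)) x) x := by
  rw [iteratedDeriv_succ]
  exact (contDiff_exp_neg_sq.differentiable_iteratedDeriv n (by simp) x).hasDerivAt

lemma iteratedDeriv_succ_exp_neg_sq (n : ℕ) (x : ℝ) :
    iteratedDeriv (n + 1) (fun t : ℝ => rexp (-t ^ 2)) x =
      -2 * (x * iteratedDeriv n (fun t : ℝ => rexp (-t ^ 2)) x
        + n * iteratedDeriv (n - 1) (fun t : ℝ => rexp (-t ^ 2)) x) := by
  have hderiv : deriv (fun t : ℝ => rexp (-t ^ 2)) = fun t => -2 * (t * rexp (-t ^ 2)) := by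
    ext t
    rw [deriv_exp (by fun_prop)]
    simp; ring
  rw [iteratedDeriv_succ', hderiv, iteratedDeriv_const_mul_field,
    iteratedDeriv_id_mul (contDiff_exp_neg_sq.contDiffAt.of_le (by simp))]

lemma Hphys_zero (x : ℝ) : Hphys 0 x = 1 := by
  simp [Hphys, ← Real.exp_add]

-- At `n = 0` the truncated index `n - 1` is harmless: its term carries the factor `n`.
lemma Hphys_succ (n : ℕ) (x : ℝ) :
    Hphys (n + 1) x = 2 * x * Hphys n x - 2 * n * Hphys (n - 1) x := by
  rcases n with _ | n
  · simp [Hphys, iteratedDeriv_succ_exp_neg_sq]; ring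
  · simp only [Hphys, iteratedDeriv_succ_exp_neg_sq (n + 1), Nat.add_sub_cancel]
    push_cast
    ring

lemma hasDerivAt_Hphys (n : ℕ) (x : ℝ) :
    HasDerivAt (Hphys n) (2 * x * Hphys n x - Hphys (n + 1) x) x := by
  have hexp : HasDerivAt (fun y : ℝ => rexp (y ^ 2)) (2 * x * rexp (x ^ 2)) x := by
    simpa [mul_comm] using (hasDerivAt_pow 2 x).exp
  have h := (hexp.const_mul ((-1 : ℝ) ^ n)).mul (hasDerivAt_iteratedDeriv_exp_neg_sq n x)
  refine HasDerivAt.congr_deriv (f := Hphys n) h ?_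
  simp only [Hphys, pow_succ]; ring

lemma exists_Hphys_eq_eval (n : ℕ) : ∃ P : ℝ[X], ∀ x, Hphys n x = P.eval x := by
  induction n using Nat.strong_induction_on with
  | _ n ih =>
    rcases n with _ | n
    · exact ⟨1, by simp [Hphys_zero]⟩
    · obtain ⟨P, hP⟩ := ih n n.lt_succ_self
      obtain ⟨Q, hQ⟩ := ih (n - 1) (by omega)
      exact ⟨C 2 * X * P - C (2 * n : ℝ) * Q, fun x => by simp [Hphys_succ, hP, hQ]⟩

lemma hFun_succ (n : ℕ) (x : ℝ) :
    hFun (n + 1) x = 2 * x * hFun n x - 2 * n * hFun (n - 1) x := by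
  simp only [hFun, Hphys_succ]; ring

lemma hasDerivAt_hFun (n : ℕ) (x : ℝ) :
    HasDerivAt (hFun n) (x * hFun n x - hFun (n + 1) x) x := by
  have hgauss : HasDerivAt (fun y : ℝ => rexp (-y ^ 2 / 2)) (rexp (-x ^ 2 / 2) * -x) x := by
    have h : HasDerivAt (fun y : ℝ => -y ^ 2 / 2) (-x) x :=
      ((hasDerivAt_pow 2 x).neg.div_const 2).congr_deriv (by norm_num; ring)
    exact h.exp
  exact (hgauss.mul (hasDerivAt_Hphys n x)).congr_deriv (by simp only [hFun]; ring)

lemma hasDerivAt_hFun' (n : ℕ) (x : ℝ) :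
    HasDerivAt (hFun n) (2 * n * hFun (n - 1) x - x * hFun n x) x :=
  (hasDerivAt_hFun n x).congr_deriv (by rw [hFun_succ]; ring)

lemma exists_hFun_mul_hFun_eq (m n : ℕ) (a : ℝ) :
    ∃ R : ℝ[X], ∀ y, hFun m (y + a) * hFun n (y - a) = R.eval y * rexp (-1 * y ^ 2) := by
  obtain ⟨P, hP⟩ := exists_Hphys_eq_eval m
  obtain ⟨Q, hQ⟩ := exists_Hphys_eq_eval n
  refine ⟨C (rexp (-a ^ 2)) * P.comp (X + C a) * Q.comp (X - C a), fun y => ?_⟩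
  have hexp : rexp (-(y + a) ^ 2 / 2) * rexp (-(y - a) ^ 2 / 2) =
      rexp (-a ^ 2) * rexp (-1 * y ^ 2) := by
    rw [← Real.exp_add, ← Real.exp_add]; ring_nf
  simp only [hFun, hP, hQ, eval_mul, eval_C, eval_comp, eval_add, eval_sub, eval_X]
  linear_combination P.eval (y + a) * Q.eval (y - a) * hexp

lemma integrable_hFun_mul_hFun (m n : ℕ) (a : ℝ) :
    Integrable fun y => hFun m (y + a) * hFun n (y - a) := by
  obtain ⟨R, hR⟩ := exists_hFun_mul_hFun_eq m n a
  simpa only [hR] using integrable_eval_mul_exp_neg_mul_sq one_pos R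

section FourierWigner

variable (p q : ℝ)

noncomputable def fwIntegrand (m n : ℕ) (y : ℝ) : ℂ :=
  cexp (I * y * q) * (hFun m (y + p / 2) : ℂ) * (hFun n (y - p / 2) : ℂ)

noncomputable def fwIntegral (m n : ℕ) : ℂ := ∫ y, fwIntegrand p q m n y

lemma integrable_fwIntegrand (m n : ℕ) : Integrable (fwIntegrand p q m n) := by
  have h := (integrable_hFun_mul_hFun m n (p / 2)).ofReal (𝕜 := ℂ)
  have hbdd := h.bdd_mul (c := 1) (f := fun y : ℝ => cexp (I * y * q)) (by fun_prop)
    (ae_of_all _ fun y => by rw [mul_assoc, ← ofReal_mul, norm_exp_I_mul_ofReal])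
  refine hbdd.congr (ae_of_all _ fun y => ?_)
  simp only [fwIntegrand, RCLike.ofReal_eq_complex_ofReal, ofReal_mul, mul_assoc]

variable {p q}

lemma hasDerivAt_fwIntegrand {m n : ℕ} {y a b : ℝ} (ha : HasDerivAt (hFun m) a (y + p / 2))
    (hb : HasDerivAt (hFun n) b (y - p / 2)) :
    HasDerivAt (fwIntegrand p q m n) (I * q * fwIntegrand p q m n y
      + cexp (I * y * q) * (a * hFun n (y - p / 2) + hFun m (y + p / 2) * b)) y := by
  have he : HasDerivAt (fun y : ℝ => cexp (I * y * q)) (cexp (I * y * q) * (I * q)) y := by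
    have h : HasDerivAt (fun y : ℝ => I * y * q) (I * q) y := by
      simpa using ((hasDerivAt_id (y : ℂ)).comp_ofReal.const_mul I).mul_const (q : ℂ)
    exact h.cexp
  exact ((he.mul (ha.comp_add_const y (p / 2)).ofReal_comp).mul
    (hb.comp_sub_const y (p / 2)).ofReal_comp).congr_deriv
      (by simp only [fwIntegrand, Pi.mul_apply]; ring)

variable (p q)

lemma hasDerivAt_fwIntegrand_succ_left (m n : ℕ) (y : ℝ) :
    HasDerivAt (fwIntegrand p q m n) ((p + I * q) * fwIntegrand p q m n y
      + 2 * n * fwIntegrand p q m (n - 1) y - fwIntegrand p q (m + 1) n y) y :=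
  (hasDerivAt_fwIntegrand (hasDerivAt_hFun m _) (hasDerivAt_hFun' n _)).congr_deriv
    (by simp only [fwIntegrand]; push_cast; ring)

lemma hasDerivAt_fwIntegrand_succ_right (m n : ℕ) (y : ℝ) :
    HasDerivAt (fwIntegrand p q m n) (-(p - I * q) * fwIntegrand p q m n y
      + 2 * m * fwIntegrand p q (m - 1) n y - fwIntegrand p q m (n + 1) y) y :=
  (hasDerivAt_fwIntegrand (hasDerivAt_hFun' m _) (hasDerivAt_hFun n _)).congr_deriv
    (by simp only [fwIntegrand]; push_cast; ring)

lemma fwIntegral_succ_left (m n : ℕ) :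
    fwIntegral p q (m + 1) n =
      (p + I * q) * fwIntegral p q m n + 2 * n * fwIntegral p q m (n - 1) := by
  have hW := integrable_fwIntegrand p q
  have h₁ := (hW m n).const_mul (p + I * q)
  have h₂ := (hW m (n - 1)).const_mul (2 * n : ℂ)
  rw [fwIntegral, integral_eq_integral_of_hasDerivAt_sub
    (hasDerivAt_fwIntegrand_succ_left p q m n) (hW m n) (h₁.add h₂) (hW (m + 1) n),
    integral_add h₁ h₂, integral_const_mul, integral_const_mul, fwIntegral, fwIntegral]

lemma fwIntegral_succ_right (m n : ℕ) :
    fwIntegral p q m (n + 1) =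
      -(p - I * q) * fwIntegral p q m n + 2 * m * fwIntegral p q (m - 1) n := by
  have hW := integrable_fwIntegrand p q
  have h₁ := (hW m n).const_mul (-(p - I * q))
  have h₂ := (hW (m - 1) n).const_mul (2 * m : ℂ)
  rw [fwIntegral, integral_eq_integral_of_hasDerivAt_sub
    (hasDerivAt_fwIntegrand_succ_right p q m n) (hW m n) (h₁.add h₂) (hW m (n + 1)),
    integral_add h₁ h₂, integral_const_mul, integral_const_mul, fwIntegral, fwIntegral]

lemma fwIntegral_zero_zero :
    fwIntegral p q 0 0 = (√π : ℂ) * cexp (-((p : ℂ) ^ 2 + (q : ℂ) ^ 2) / 4) := by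
  have hW : fwIntegrand p q 0 0 =
      fun y : ℝ => cexp (-1 * y ^ 2 + I * q * y + -(p : ℂ) ^ 2 / 4) := by
    ext y
    simp only [fwIntegrand, hFun, Hphys_zero, mul_one, ofReal_exp, ← Complex.exp_add]
    congr 1
    push_cast
    ring
  rw [fwIntegral, hW, integral_cexp_quadratic (by simp)]
  have hsqrt : ((π : ℂ) / -(-1)) ^ (1 / 2 : ℂ) = (√π : ℂ) := by
    rw [neg_neg, div_one, Real.sqrt_eq_rpow, ofReal_cpow Real.pi_pos.le]
    norm_num
  rw [hsqrt]
  congr 2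
  ring_nf
  simp [I_sq]
  ring

end FourierWigner

noncomputable def HcTerm (m n : ℕ) (z : ℂ) (k : ℕ) : ℂ :=
  (-1 : ℂ) ^ k * (k.factorial : ℂ) * (m.choose k : ℂ) * (n.choose k : ℂ)
    * z ^ (m - k) * (starRingEnd ℂ z) ^ (n - k)

lemma Hc_zero_right (m : ℕ) (z : ℂ) : Hc m 0 z = z ^ m := by
  simp [Hc]

lemma Hc_zero_left (n : ℕ) (z : ℂ) : Hc 0 n z = (starRingEnd ℂ z) ^ n := by
  simp [Hc]

lemma Hc_eq_sum_range (m n : ℕ) (z : ℂ) :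
    Hc m n z = ∑ k ∈ Finset.range (n + 1), HcTerm m n z k := by
  refine Finset.sum_subset (by simp) fun k hk hk' => ?_
  simp only [Finset.mem_range] at hk hk'
  simp [Nat.choose_eq_zero_of_lt (show m < k by omega)]

lemma HcTerm_succ_zero (m n : ℕ) (z : ℂ) : HcTerm (m + 1) n z 0 = z * HcTerm m n z 0 := by
  simp [HcTerm, pow_succ]; ring

lemma HcTerm_succ_succ_succ (m n k : ℕ) (z : ℂ) :
    HcTerm (m + 1) (n + 1) z (k + 1) =
      z * HcTerm m (n + 1) z (k + 1) - (n + 1) * HcTerm m n z k := by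
  have hchoose :
      ((k : ℂ) + 1) * ((n + 1).choose (k + 1) : ℂ) = ((n : ℂ) + 1) * (n.choose k : ℂ) := by
    exact_mod_cast (mul_comm _ _).trans (Nat.add_one_mul_choose_eq n k).symm
  have hpow : ((m.choose (k + 1) : ℕ) : ℂ) * z ^ (m - k) =
      z * (m.choose (k + 1) * z ^ (m - (k + 1))) := by
    rcases lt_or_ge k m with hkm | hkm
    · rw [show m - k = m - (k + 1) + 1 by omega, pow_succ]; ring
    · simp [Nat.choose_eq_zero_of_lt (show m < k + 1 by omega)]
  simp only [HcTerm, Nat.choose_succ_succ' m k, Nat.factorial_succ, Nat.succ_sub_succ]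
  push_cast
  linear_combination (-1 : ℂ) ^ (k + 1) * ((k : ℂ) + 1) * (k.factorial : ℂ)
      * ((n + 1).choose (k + 1) : ℂ) * (starRingEnd ℂ z) ^ (n - k) * hpow
    - (-1 : ℂ) ^ k * (k.factorial : ℂ) * (m.choose k : ℂ) * z ^ (m - k)
      * (starRingEnd ℂ z) ^ (n - k) * hchoose

lemma Hc_succ_succ (m n : ℕ) (z : ℂ) :
    Hc (m + 1) (n + 1) z = z * Hc m (n + 1) z - (n + 1) * Hc m n z := by
  rw [Hc_eq_sum_range, Hc_eq_sum_range, Hc_eq_sum_range, Finset.sum_range_succ',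
    Finset.sum_range_succ' (HcTerm m (n + 1) z)]
  simp only [HcTerm_succ_succ_succ, HcTerm_succ_zero, Finset.sum_sub_distrib, mul_add,
    Finset.mul_sum]
  ring

lemma fwIntegral_eq (p q : ℝ) (m n : ℕ) :
    fwIntegral p q m n = (-1 : ℂ) ^ n * (√2 : ℂ) ^ (m + n) * (√π : ℂ)
      * cexp (-((p : ℂ) ^ 2 + (q : ℂ) ^ 2) / 4) * Hc m n ((p + I * q) / (√2 : ℂ)) := by
  set s : ℂ := (√2 : ℂ)
  set z : ℂ := (p + I * q) / s
  set E : ℂ := (√π : ℂ) * cexp (-((p : ℂ) ^ 2 + (q : ℂ) ^ 2) / 4) with hE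
  have hs₀ : s ≠ 0 := by simp [s]
  have hs : s ^ 2 = 2 := by simp [s, ← ofReal_pow]
  have hz : (p : ℂ) + I * q = s * z := (mul_div_cancel₀ _ hs₀).symm
  have hz' : (p : ℂ) - I * q = s * starRingEnd ℂ z := by
    simp only [z, map_div₀, map_add, map_mul, conj_ofReal, conj_I, s]
    field_simp
    ring
  suffices h : ∀ m n, fwIntegral p q m n = (-1 : ℂ) ^ n * s ^ (m + n) * E * Hc m n z by
    rw [h, hE]; ring
  intro m
  induction m with
  | zero =>
    intro n
    induction n with
    | zero => simp [Hc_zero_right, fwIntegral_zero_zero, hE]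
    | succ n ih =>
      rw [fwIntegral_succ_right, ih, Hc_zero_left, Hc_zero_left, hz']
      push_cast
      ring
  | succ m ih =>
    intro n
    rcases n with _ | n
    · rw [fwIntegral_succ_left, ih, Hc_zero_right, Hc_zero_right, hz]
      push_cast
      ring
    · rw [fwIntegral_succ_left, Nat.add_sub_cancel, ih, ih, Hc_succ_succ, hz]
      push_cast
      linear_combination (-(n : ℂ) - 1) * (-1 : ℂ) ^ n * s ^ (m + n) * E * Hc m n z * hs

lemma rpow_two_pi_neg_half_mul_sqrt_two_pow_mul_sqrt_pi (k : ℕ) :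
    (2 * π) ^ (-(1 : ℝ) / 2) * √2 ^ k * √π = (2 : ℝ) ^ (((k : ℝ) - 1) / 2) := by
  rw [Real.mul_rpow zero_le_two Real.pi_pos.le, Real.sqrt_eq_rpow, Real.sqrt_eq_rpow,
    ← Real.rpow_natCast, ← Real.rpow_mul zero_le_two]
  calc (2 : ℝ) ^ (-(1 : ℝ) / 2) * π ^ (-(1 : ℝ) / 2) * 2 ^ (1 / 2 * (k : ℝ)) * π ^ (1 / 2 : ℝ)
      = 2 ^ (-(1 : ℝ) / 2 + 1 / 2 * k) * π ^ (-(1 : ℝ) / 2 + 1 / 2) := by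
        rw [Real.rpow_add two_pos, Real.rpow_add Real.pi_pos]; ring
    _ = (2 : ℝ) ^ (((k : ℝ) - 1) / 2) := by norm_num; ring_nf

theorem FW_hermite (m n : ℕ) (p q : ℝ) :
    ((2 * Real.pi) ^ (-(1:ℝ)/2) : ℝ) *
        ∫ y : ℝ, Complex.exp (Complex.I * y * q) * (hFun m (y + p/2) : ℂ) * (hFun n (y - p/2) : ℂ)
      = (-1 : ℂ)^n * (((2 : ℝ) ^ (((m : ℝ) + n - 1) / 2) : ℝ) : ℂ)
          * Complex.exp (-((p : ℂ)^2 + (q : ℂ)^2) / 4)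
          * Hc m n (((p : ℂ) + Complex.I * q) / (Real.sqrt 2 : ℂ)) := by
  have hconst := rpow_two_pi_neg_half_mul_sqrt_two_pow_mul_sqrt_pi (m + n)
  push_cast at hconst
  calc _ = (((2 * π) ^ (-(1 : ℝ) / 2) : ℝ) : ℂ) * fwIntegral p q m n := rfl
    _ = _ := by
      rw [fwIntegral_eq, ← hconst]
      push_cast
      ring
end

section
/- For all real p, q and complex u, v: ∑_{m,n=0}^∞ (u^m/m!)(v^n/n!) · (2π)^{-1/2} ∫_ℝ e^{iyq} h_m(y+p/2) h_n(y-p/2) dy = 2^{-1/2} e^{-(p²+q²)/4} exp(2uv + (p+iq)u - (p-iq)v). -/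
/-
The Hermite functions are h_n(x) = (-1)^n e^{x²/2} f^{(n)}(x) for the entire function
f(z) = e^{-z²}. Taylor's theorem for f at x, evaluated at x - t, gives the generating function
∑ tⁿ/n! h_n(x) = exp(-x²/2 + 2xt - t²), and Cauchy's estimates on circles of radius R give
|h_n(x)| ≤ n! R⁻ⁿ e^{5R²} e^{-x²/4}. Taking R > |t| makes the series dominated by a geometric
one, so both sums can be taken inside the integral, and what remains is the Fourier transform of a
Gaussian.
-/

open MeasureTheory Complex Real

open scoped Nat

lemma Complex.ofReal_iteratedDeriv_of_differentiable {e : ℂ → ℂ} (he : Differentiable ℂ e)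
    {f : ℝ → ℝ} (hf : ∀ x : ℝ, (f x : ℂ) = e x) (n : ℕ) (x : ℝ) :
    ((iteratedDeriv n f x : ℝ) : ℂ) = iteratedDeriv n e x := by
  induction n generalizing x with
  | zero => simpa using hf x
  | succ n ih =>
    have hdiff : Differentiable ℂ (iteratedDeriv n e) :=
      (he.contDiff (n := ⊤)).differentiable_iteratedDeriv n (by simp)
    have hderiv := (hdiff x).hasDerivAt
    rw [← iteratedDeriv_succ] at hderiv
    have hC : HasDerivAt (fun y : ℝ => ((iteratedDeriv n f y : ℝ) : ℂ))
        (iteratedDeriv (n + 1) e x) x := by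
      simpa only [ih] using hderiv.comp_ofReal
    have hR : HasDerivAt (iteratedDeriv n f) (iteratedDeriv (n + 1) e x).re x := by
      simpa only [← ih, ofReal_re] using hderiv.real_of_complex
    rw [iteratedDeriv_succ, hR.deriv]
    exact (hC.unique hR.ofReal_comp).symm

noncomputable def complexGaussian (z : ℂ) : ℂ := cexp (-z ^ 2)

lemma differentiable_complexGaussian : Differentiable ℂ complexGaussian := by
  unfold complexGaussian; fun_prop

lemma ofReal_hFun (n : ℕ) (x : ℝ) :
    (hFun n x : ℂ) = (-1) ^ n * cexp (x ^ 2 / 2) * iteratedDeriv n complexGaussian x := by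
  have hderiv := ofReal_iteratedDeriv_of_differentiable differentiable_complexGaussian
    (f := fun t : ℝ => rexp (-t ^ 2)) (fun t => by simp [complexGaussian]) n x
  have hexp : cexp (-x ^ 2 / 2) * cexp (x ^ 2) = cexp (x ^ 2 / 2) := by
    rw [← Complex.exp_add]; ring_nf
  simp only [hFun, Hphys, ofReal_mul, ofReal_pow, ofReal_neg, ofReal_one, ofReal_exp, ofReal_div,
    ofReal_ofNat, hderiv]
  linear_combination ((-1) ^ n * iteratedDeriv n complexGaussian x) * hexp

lemma continuous_hFun (n : ℕ) : Continuous (hFun n) := by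
  have : Continuous (iteratedDeriv n fun t : ℝ => rexp (-t ^ 2)) :=
    (show ContDiff ℝ ⊤ fun t : ℝ => rexp (-t ^ 2) by fun_prop).continuous_iteratedDeriv n
      (by simp)
  unfold hFun Hphys; fun_prop

noncomputable def hermiteGen (x : ℝ) (t : ℂ) : ℂ :=
  cexp (-(x : ℂ) ^ 2 / 2 + 2 * x * t - t ^ 2)

lemma hasSum_hFun (x : ℝ) (t : ℂ) :
    HasSum (fun n : ℕ => t ^ n / n ! * hFun n x) (hermiteGen x t) := by
  have htaylor := (hasSum_taylorSeries_of_entire differentiable_complexGaussian x (x - t)).mul_left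
    (cexp (x ^ 2 / 2))
  have hval : cexp (x ^ 2 / 2) * complexGaussian (x - t) = hermiteGen x t := by
    rw [complexGaussian, hermiteGen, ← Complex.exp_add]; ring_nf
  have hterm : ∀ n : ℕ, cexp (x ^ 2 / 2) * ((n ! : ℂ)⁻¹ • ((x : ℂ) - t - x) ^ n •
      iteratedDeriv n complexGaussian x) = t ^ n / n ! * hFun n x := fun n => by
    rw [ofReal_hFun, smul_eq_mul, smul_eq_mul, sub_sub_cancel_left, neg_pow]
    ring
  simpa only [hval, hterm] using htaylor

lemma norm_complexGaussian_le_of_mem_sphere (x R : ℝ) :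
    ∀ z ∈ Metric.sphere (x : ℂ) R,
      ‖complexGaussian z‖ ≤ rexp (-x ^ 2 + 2 * |x| * R + R ^ 2) := by
  intro z hz
  rw [mem_sphere_iff_norm] at hz
  have hsq : (z.re - x) ^ 2 + z.im ^ 2 = R ^ 2 := by
    rw [← hz, Complex.sq_norm, normSq_apply, sub_re, sub_im, ofReal_re, ofReal_im, sub_zero]
    ring
  have hre : |z.re - x| ≤ R := by
    rw [← hz]; simpa using abs_re_le_norm (z - x)
  rw [complexGaussian, Complex.norm_exp, exp_le_exp]
  simp only [neg_re, pow_two, mul_re]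
  have hcross : -(x * (z.re - x)) ≤ |x| * R :=
    calc -(x * (z.re - x)) ≤ |x * (z.re - x)| := neg_le_abs _
      _ = |x| * |z.re - x| := abs_mul _ _
      _ ≤ |x| * R := by gcongr
  nlinarith [hsq, hcross]

lemma abs_hFun_le {R : ℝ} (hR : 0 < R) (n : ℕ) (x : ℝ) :
    |hFun n x| ≤ n ! / R ^ n * rexp (5 * R ^ 2) * rexp (-x ^ 2 / 4) := by
  have hcauchy := norm_iteratedDeriv_le_of_forall_mem_sphere_norm_le n hR
    differentiable_complexGaussian.diffContOnCl (norm_complexGaussian_le_of_mem_sphere x R)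
  have hnorm : |hFun n x| = rexp (x ^ 2 / 2) * ‖iteratedDeriv n complexGaussian x‖ := by
    rw [← Real.norm_eq_abs, ← Complex.norm_real, ofReal_hFun]
    simp [Complex.norm_exp, (by norm_cast : ((x : ℂ) ^ 2).re = x ^ 2)]
  have hquad : -x ^ 2 / 2 + 2 * |x| * R + R ^ 2 ≤ 5 * R ^ 2 + -x ^ 2 / 4 := by
    nlinarith [sq_nonneg (|x| - 4 * R), sq_abs x]
  calc |hFun n x| ≤ rexp (x ^ 2 / 2) * (n ! * rexp (-x ^ 2 + 2 * |x| * R + R ^ 2) / R ^ n) := by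
        rw [hnorm]; gcongr
    _ = n ! / R ^ n * rexp (-x ^ 2 / 2 + 2 * |x| * R + R ^ 2) := by
        rw [mul_div_assoc', mul_left_comm, ← Real.exp_add]; ring_nf
    _ ≤ n ! / R ^ n * rexp (5 * R ^ 2 + -x ^ 2 / 4) := by gcongr
    _ = n ! / R ^ n * rexp (5 * R ^ 2) * rexp (-x ^ 2 / 4) := by rw [Real.exp_add, mul_assoc]

lemma integrable_hFun (n : ℕ) : Integrable fun x => (hFun n x : ℂ) := by
  refine ((integrable_exp_neg_mul_sq (b := 1 / 4) (by norm_num)).const_mul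
    (n ! / 1 ^ n * rexp (5 * 1 ^ 2))).mono'
    (continuous_ofReal.comp (continuous_hFun n)).aestronglyMeasurable (ae_of_all _ fun x => ?_)
  simpa [norm_real, div_eq_inv_mul, mul_comm] using abs_hFun_le one_pos n x

lemma norm_coeff_mul_hFun_le (t : ℂ) {R : ℝ} (hR : 0 < R) (n : ℕ) (x : ℝ) :
    ‖t ^ n / n ! * hFun n x‖ ≤ (‖t‖ / R) ^ n * rexp (5 * R ^ 2) := by
  have hdecay : rexp (-x ^ 2 / 4) ≤ 1 := exp_le_one_iff.2 (by nlinarith [sq_nonneg x])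
  calc ‖t ^ n / n ! * hFun n x‖ = ‖t‖ ^ n / n ! * |hFun n x| := by
        simp [norm_real]
    _ ≤ ‖t‖ ^ n / n ! * (n ! / R ^ n * rexp (5 * R ^ 2) * 1) := by
        gcongr
        exact (abs_hFun_le hR n x).trans (by gcongr)
    _ = (‖t‖ / R) ^ n * rexp (5 * R ^ 2) := by
        rw [div_pow]; field_simp

lemma integrable_hermiteGen (t : ℂ) : Integrable fun x : ℝ => hermiteGen x t := by
  convert integrable_cexp_quadratic (b := 1 / 2) (by norm_num) (2 * t) (-t ^ 2) using 2 with x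
  rw [hermiteGen]; ring_nf

lemma MeasureTheory.Integrable.cexp_I_mul_mul {g : ℝ → ℂ} (hg : Integrable g) (q : ℝ) :
    Integrable fun y : ℝ => cexp (I * y * q) * g y :=
  hg.bdd_mul (c := 1)
    (by fun_prop : Continuous fun y : ℝ => cexp (I * y * q)).aestronglyMeasurable
    (ae_of_all _ fun y => by simp [Complex.norm_exp])

lemma hasSum_integral_mul_hFun (a : ℝ) (t : ℂ) {ψ : ℝ → ℂ} (hψ : Integrable ψ) :
    HasSum (fun n : ℕ => t ^ n / n ! * ∫ y, ψ y * hFun n (y + a))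
      (∫ y, ψ y * hermiteGen (y + a) t) := by
  set R := 2 * ‖t‖ + 1
  have hR : 0 < R := by positivity
  have hratio : ‖t‖ / R < 1 := by rw [div_lt_one hR]; linarith
  simp_rw [← integral_const_mul]
  refine hasSum_integral_of_dominated_convergence
    (fun n y => (‖t‖ / R) ^ n * rexp (5 * R ^ 2) * ‖ψ y‖) (fun n => ?_)
    (fun n => ae_of_all _ fun y => ?_) (ae_of_all _ fun y => ?_) ?_ (ae_of_all _ fun y => ?_)
  · exact (hψ.1.mul ((continuous_ofReal.comp (continuous_hFun n)).comp
      (continuous_add_const a)).aestronglyMeasurable).const_mul _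
  · rw [mul_left_comm, norm_mul, mul_comm ‖ψ y‖]
    gcongr
    exact norm_coeff_mul_hFun_le t hR n (y + a)
  · exact ((summable_geometric_of_lt_one (by positivity) hratio).mul_right _).mul_right _
  · simp_rw [tsum_mul_right]
    exact hψ.norm.const_mul _
  · simpa only [mul_left_comm] using (hasSum_hFun (y + a) t).mul_left (ψ y)

lemma integral_cexp_I_mul_mul_hermiteGen_mul_hermiteGen (p q : ℝ) (u v : ℂ) :
    ∫ y : ℝ, cexp (I * y * q) * hermiteGen (y + p / 2) u * hermiteGen (y - p / 2) v
      = (√π : ℂ) * cexp (-((p : ℂ) ^ 2 + (q : ℂ) ^ 2) / 4)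
          * cexp (2 * u * v + ((p : ℂ) + I * q) * u - ((p : ℂ) - I * q) * v) := by
  have hquad : ∀ y : ℝ, cexp (I * y * q) * hermiteGen (y + p / 2) u * hermiteGen (y - p / 2) v
      = cexp (-1 * y ^ 2 + (I * q + 2 * u + 2 * v) * y
          + (-p ^ 2 / 4 + p * u - p * v - u ^ 2 - v ^ 2)) := by
    intro y
    simp only [hermiteGen, ← Complex.exp_add]
    push_cast
    ring_nf
  simp_rw [hquad]
  have hsqrt : ((π : ℂ) / - -1) ^ (1 / 2 : ℂ) = √π := by
    rw [neg_neg, div_one, Real.sqrt_eq_rpow, ofReal_cpow pi_pos.le]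
    norm_num
  rw [integral_cexp_quadratic (by simp), hsqrt, mul_assoc, ← Complex.exp_add]
  congr 2
  linear_combination ((q : ℂ) ^ 2 / 4) * I_sq

lemma two_pi_rpow_neg_half_mul_sqrt_pi :
    (2 * π) ^ (-(1 : ℝ) / 2) * √π = (2 : ℝ) ^ (-(1 : ℝ) / 2) := by
  rw [Real.sqrt_eq_rpow, mul_rpow (by norm_num) pi_pos.le, mul_assoc, ← rpow_add pi_pos]
  norm_num

theorem FW_hermite_generating (p q : ℝ) (u v : ℂ) :
    ∑' (m : ℕ) (n : ℕ),
        u^m / (Nat.factorial m : ℂ) * (v^n / (Nat.factorial n : ℂ)) *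
          (((2 * Real.pi) ^ (-(1:ℝ)/2) : ℝ) *
            ∫ y : ℝ, Complex.exp (Complex.I * y * q) * (hFun m (y + p/2) : ℂ) * (hFun n (y - p/2) : ℂ))
      = (((2 : ℝ) ^ (-(1:ℝ)/2) : ℝ) : ℂ) * Complex.exp (-((p : ℂ)^2 + (q : ℂ)^2) / 4)
          * Complex.exp (2 * u * v + ((p : ℂ) + Complex.I * q) * u - ((p : ℂ) - Complex.I * q) * v) := by
  set C : ℂ := (((2 * π) ^ (-(1 : ℝ) / 2) : ℝ) : ℂ)
  have hinner (m : ℕ) : HasSum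
      (fun n : ℕ => u ^ m / m ! * (v ^ n / n !) *
        (C * ∫ y : ℝ, cexp (I * y * q) * hFun m (y + p / 2) * hFun n (y - p / 2)))
      (u ^ m / m ! * C *
        ∫ y : ℝ, cexp (I * y * q) * hFun m (y + p / 2) * hermiteGen (y - p / 2) v) := by
    have hA := hasSum_integral_mul_hFun (-(p / 2)) v
      (((integrable_hFun m).comp_add_right (p / 2)).cexp_I_mul_mul q)
    simp only [← sub_eq_add_neg] at hA
    exact (hA.mul_left (u ^ m / m ! * C)).congr_fun fun n => by ring
  have houter : HasSum
      (fun m : ℕ => u ^ m / m ! * C *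
        ∫ y : ℝ, cexp (I * y * q) * hFun m (y + p / 2) * hermiteGen (y - p / 2) v)
      (C * ∫ y : ℝ,
        cexp (I * y * q) * hermiteGen (y + p / 2) u * hermiteGen (y - p / 2) v) := by
    have hA := hasSum_integral_mul_hFun (p / 2) u
      (((integrable_hermiteGen v).comp_sub_right (p / 2)).cexp_I_mul_mul q)
    simp only [mul_right_comm (cexp _) (hermiteGen _ v)] at hA
    exact (hA.mul_left C).congr_fun fun m => by ring
  rw [tsum_congr fun m => (hinner m).tsum_eq, houter.tsum_eq,
    integral_cexp_I_mul_mul_hermiteGen_mul_hermiteGen, ← two_pi_rpow_neg_half_mul_sqrt_pi]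
  push_cast
  ring
end

section
/- For every real t and nonnegative integers m, n: ∫_ℝ H_m(y + t/2) H_n(y - t/2) e^{-y²} dy = (-1)^n √π · 2^{(m+n)/2} · H_{m,n}(t/√2, t/√2). -/
open MeasureTheory Complex Real

section Aux

open Polynomial Filter Set

noncomputable def HP : ℕ → Polynomial ℝ
  | 0 => 1
  | n + 1 => C 2 * X * HP n - derivative (HP n)

lemma contDiff_gauss : ContDiff ℝ (⊤ : ℕ∞) (fun t : ℝ => Real.exp (-t^2)) := by
  fun_prop

lemma deriv_iter_gauss (n : ℕ) :
    deriv (iteratedDeriv n (fun t : ℝ => Real.exp (-t^2))) =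
      iteratedDeriv (n+1) (fun t : ℝ => Real.exp (-t^2)) := (iteratedDeriv_succ).symm

lemma iter_gauss_eq (n : ℕ) (x : ℝ) :
    iteratedDeriv n (fun t : ℝ => Real.exp (-t^2)) x
      = (-1:ℝ)^n * Real.exp (-x^2) * (HP n).eval x := by
  induction n generalizing x with
  | zero => simp [HP]
  | succ n ih =>
    have hfun : iteratedDeriv n (fun t : ℝ => Real.exp (-t^2))
        = fun x => (-1:ℝ)^n * Real.exp (-x^2) * (HP n).eval x := funext ih
    have hd : HasDerivAt (fun x : ℝ => (-1:ℝ)^n * Real.exp (-x^2) * (HP n).eval x)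
        ((-1:ℝ)^n * ((Real.exp (-x^2) * (-(2*x))) * (HP n).eval x
          + Real.exp (-x^2) * (derivative (HP n)).eval x)) x := by
      have h1 : HasDerivAt (fun x : ℝ => Real.exp (-x^2)) (Real.exp (-x^2) * (-(2*x))) x := by
        have : HasDerivAt (fun x : ℝ => -x^2) (-(2*x)) x := by
          simpa using ((hasDerivAt_pow 2 x).fun_neg)
        exact (Real.hasDerivAt_exp _).comp x this
      have h2 := (HP n).hasDerivAt x
      simpa [mul_assoc] using ((h1.mul h2).const_mul ((-1:ℝ)^n))
    rw [iteratedDeriv_succ, hfun, hd.deriv]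
    simp only [HP, eval_sub, eval_mul, eval_C, eval_X, pow_succ]
    ring

lemma derivHP : ∀ n, derivative (HP (n+1)) = C (2*(n+1) : ℝ) * HP n := by
  intro n
  induction n with
  | zero => simp [HP]
  | succ n ih =>
    show derivative (C 2 * X * HP (n+1) - derivative (HP (n+1))) = _
    rw [derivative_sub, derivative_mul, derivative_mul, ih, derivative_C, derivative_X]
    rw [show derivative (C (2*(↑n+1):ℝ) * HP n) = C (2*(↑n+1):ℝ) * derivative (HP n) from by
      rw [derivative_mul, derivative_C]; ring]
    rw [show HP (n+1) = C 2 * X * HP n - derivative (HP n) from rfl]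
    simp only [C_add, C_mul, C_1, Nat.cast_add, Nat.cast_one]
    ring

lemma derivHP' (n : ℕ) : derivative (HP n) = C (2*(n:ℝ)) * HP (n-1) := by
  cases n with
  | zero => simp [HP]
  | succ n =>
      rw [derivHP n]
      norm_num


lemma integrable_poly_gauss (p : ℝ[X]) :
    Integrable (fun y : ℝ => p.eval y * Real.exp (-y^2)) := by
  induction p using Polynomial.induction_on' with
  | monomial n c =>
      have h := (integrable_rpow_mul_exp_neg_mul_sq (b := 1) one_pos
        (s := (n : ℝ)) (by exact_mod_cast neg_one_lt_zero.trans_le n.cast_nonneg)).const_mul c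
      refine h.congr (by filter_upwards with x; simp [Real.rpow_natCast,
        Polynomial.eval_monomial]; ring)
  | add p q hp hq =>
      exact (hp.add hq).congr (by filter_upwards with x; simp [add_mul])

lemma tendsto_poly_gauss_atTop (p : ℝ[X]) :
    Tendsto (fun y : ℝ => p.eval y * Real.exp (-y^2)) atTop (nhds 0) := by
  have h1 := p.tendsto_div_exp_atTop
  have h2 : Tendsto (fun y : ℝ => Real.exp (y - y^2)) atTop (nhds 0) := by
    apply Real.tendsto_exp_atBot.comp
    have : Tendsto (fun y : ℝ => y * (1 - y)) atTop atBot := by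
      apply Tendsto.atTop_mul_atBot₀ tendsto_id
      exact tendsto_atBot_add_const_left _ 1 (tendsto_neg_atBot_iff.mpr tendsto_id)
    refine this.congr (by intro y; ring)
  have := h1.mul h2
  rw [mul_zero] at this
  refine this.congr (fun y => ?_)
  rw [div_mul_eq_mul_div, mul_div_assoc, ← Real.exp_sub]
  congr 2
  ring

lemma tendsto_poly_gauss_atBot (p : ℝ[X]) :
    Tendsto (fun y : ℝ => p.eval y * Real.exp (-y^2)) atBot (nhds 0) := by
  have h := tendsto_poly_gauss_atTop (p.comp (-X))
  have := h.comp tendsto_neg_atBot_atTop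
  refine this.congr (fun y => ?_)
  simp [Polynomial.eval_comp]

lemma integral_IBP (p : ℝ[X]) :
    ∫ y : ℝ, (derivative p - C 2 * X * p).eval y * Real.exp (-y^2) = 0 := by
  set F : ℝ → ℝ := fun y => p.eval y * Real.exp (-y^2) with hF
  set F' : ℝ → ℝ := fun y => (derivative p - C 2 * X * p).eval y * Real.exp (-y^2) with hF'
  have hderiv : ∀ y : ℝ, HasDerivAt F (F' y) y := by
    intro y
    have h1 : HasDerivAt (fun x : ℝ => Real.exp (-x^2)) (Real.exp (-y^2) * (-(2*y))) y := by
      have : HasDerivAt (fun x : ℝ => -x^2) (-(2*y)) y := by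
        simpa using ((hasDerivAt_pow 2 y).fun_neg)
      exact (Real.hasDerivAt_exp _).comp y this
    have := (p.hasDerivAt y).mul h1
    refine this.congr_deriv ?_
    simp only [hF', eval_sub, eval_mul, eval_C, eval_X]
    ring
  have hint : Integrable F' := integrable_poly_gauss _
  have h1 : ∫ y in Iic (0:ℝ), F' y = F 0 - 0 :=
    integral_Iic_of_hasDerivAt_of_tendsto' (fun x _ => hderiv x) hint.integrableOn
      (tendsto_poly_gauss_atBot p)
  have h2 : ∫ y in Ioi (0:ℝ), F' y = 0 - F 0 :=
    integral_Ioi_of_hasDerivAt_of_tendsto' (fun x _ => hderiv x) hint.integrableOn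
      (tendsto_poly_gauss_atTop p)
  have := intervalIntegral.integral_Iic_add_Ioi (b := (0:ℝ)) hint.integrableOn hint.integrableOn
  rw [h1, h2] at this
  rw [← this]; ring

noncomputable def Iint (m n : ℕ) (t : ℝ) : ℝ :=
  ∫ y : ℝ, (HP m).eval (y + t/2) * (HP n).eval (y - t/2) * Real.exp (-y^2)

lemma integrable_II (m n : ℕ) (t : ℝ) :
    Integrable (fun y : ℝ =>
      (HP m).eval (y + t/2) * (HP n).eval (y - t/2) * Real.exp (-y^2)) := by
  have h := integrable_poly_gauss ((HP m).comp (X + C (t/2)) * (HP n).comp (X - C (t/2)))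
  refine h.congr ?_
  filter_upwards with y
  simp [Polynomial.eval_comp]

lemma rec1 (m n : ℕ) (t : ℝ) :
    Iint (m+1) n t = t * Iint m n t + 2*n * Iint m (n-1) t := by
  set a := t/2 with ha
  set Q : ℝ[X] := (HP m).comp (X + C a) * (HP n).comp (X - C a) with hQ
  have hD := integral_IBP Q
  have hpoint : ∀ y : ℝ,
      (HP (m+1)).eval (y + a) * (HP n).eval (y - a) * Real.exp (-y^2)
      = t * ((HP m).eval (y + a) * (HP n).eval (y - a) * Real.exp (-y^2))
        + (2*n) * ((HP m).eval (y + a) * (HP (n-1)).eval (y - a) * Real.exp (-y^2))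
        - (derivative Q - C 2 * X * Q).eval y * Real.exp (-y^2) := by
    intro y
    rw [show HP (m+1) = C 2 * X * HP m - derivative (HP m) from rfl]
    simp only [hQ, derivative_mul, Polynomial.derivative_comp, eval_sub, eval_mul, eval_add,
      eval_C, eval_X, Polynomial.eval_comp, derivHP' m, derivHP' n, derivative_add,
      derivative_sub, derivative_X, derivative_C, eval_one, eval_zero, ha]
    push_cast
    ring
  have hI : Iint (m+1) n t
      = ∫ y : ℝ, (t * ((HP m).eval (y + a) * (HP n).eval (y - a) * Real.exp (-y^2))
        + (2*n) * ((HP m).eval (y + a) * (HP (n-1)).eval (y - a) * Real.exp (-y^2))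
        - (derivative Q - C 2 * X * Q).eval y * Real.exp (-y^2)) := by
    rw [Iint]
    exact integral_congr_ae (Filter.Eventually.of_forall hpoint)
  rw [hI, integral_sub, integral_add, MeasureTheory.integral_const_mul, MeasureTheory.integral_const_mul, hD]
  · simp [Iint, ha]
  · exact (integrable_II m n t).const_mul t
  · exact (integrable_II m (n-1) t).const_mul _
  · exact ((integrable_II m n t).const_mul t).add ((integrable_II m (n-1) t).const_mul _)
  · exact integrable_poly_gauss _

lemma rec2 (m n : ℕ) (t : ℝ) :
    Iint m (n+1) t = -t * Iint m n t + 2*m * Iint (m-1) n t := by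
  set a := t/2 with ha
  set Q : ℝ[X] := (HP m).comp (X + C a) * (HP n).comp (X - C a) with hQ
  have hD := integral_IBP Q
  have hpoint : ∀ y : ℝ,
      (HP m).eval (y + a) * (HP (n+1)).eval (y - a) * Real.exp (-y^2)
      = -t * ((HP m).eval (y + a) * (HP n).eval (y - a) * Real.exp (-y^2))
        + (2*m) * ((HP (m-1)).eval (y + a) * (HP n).eval (y - a) * Real.exp (-y^2))
        - (derivative Q - C 2 * X * Q).eval y * Real.exp (-y^2) := by
    intro y
    rw [show HP (n+1) = C 2 * X * HP n - derivative (HP n) from rfl]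
    simp only [hQ, derivative_mul, Polynomial.derivative_comp, eval_sub, eval_mul, eval_add,
      eval_C, eval_X, Polynomial.eval_comp, derivHP' m, derivHP' n, derivative_add,
      derivative_sub, derivative_X, derivative_C, eval_one, eval_zero, ha]
    push_cast
    ring
  have hI : Iint m (n+1) t
      = ∫ y : ℝ, (-t * ((HP m).eval (y + a) * (HP n).eval (y - a) * Real.exp (-y^2))
        + (2*m) * ((HP (m-1)).eval (y + a) * (HP n).eval (y - a) * Real.exp (-y^2))
        - (derivative Q - C 2 * X * Q).eval y * Real.exp (-y^2)) := by
    rw [Iint]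
    exact integral_congr_ae (Filter.Eventually.of_forall hpoint)
  rw [hI, integral_sub, integral_add, MeasureTheory.integral_const_mul, MeasureTheory.integral_const_mul, hD]
  · simp [Iint, ha]
  · exact (integrable_II m n t).const_mul _
  · exact (integrable_II (m-1) n t).const_mul _
  · exact ((integrable_II m n t).const_mul _).add ((integrable_II (m-1) n t).const_mul _)
  · exact integrable_poly_gauss _

noncomputable def Ht (m n k : ℕ) (z : ℂ) : ℂ :=
  (-1 : ℂ)^k * (Nat.factorial k : ℂ) * (Nat.choose m k : ℂ) * (Nat.choose n k : ℂ)
      * z^(m-k) * (starRingEnd ℂ z)^(n-k)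

lemma Hc_eq (m n N : ℕ) (h : min m n < N) (z : ℂ) :
    Hc m n z = ∑ k ∈ Finset.range N, Ht m n k z := by
  rw [Hc]
  apply Finset.sum_subset (Finset.range_subset_range.mpr h)
  intro k hk hnk
  simp only [Finset.mem_range, not_lt] at hnk
  rcases Nat.lt_or_ge m n with hmn | hmn
  · have : m < k := by omega
    simp [Ht, Nat.choose_eq_zero_of_lt this]
  · have : n < k := by omega
    simp [Ht, Nat.choose_eq_zero_of_lt this]

lemma Hc_rec1 (m n : ℕ) (z : ℂ) :
    Hc (m+1) n z = z * Hc m n z - n * Hc m (n-1) z := by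
  set N := m + n + 1 with hN
  rw [Hc_eq (m+1) n (N+1) (by omega) z, Hc_eq m n (N+1) (by omega) z,
    Hc_eq m (n-1) (N+1) (by omega) z]
  rw [Finset.sum_range_succ' (fun k => Ht (m+1) n k z) N,
    Finset.sum_range_succ' (fun k => Ht m n k z) N,
    Finset.sum_range_succ (fun k => Ht m (n-1) k z) N]
  have hCN : Ht m (n-1) N z = 0 := by
    simp [Ht, Nat.choose_eq_zero_of_lt (show m < N by omega)]
  have hzero : Ht (m+1) n 0 z = z * Ht m n 0 z := by
    simp [Ht, pow_succ]
    ring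
  have hterm : ∀ j, Ht (m+1) n (j+1) z = z * Ht m n (j+1) z - n * Ht m (n-1) j z := by
    intro j
    rcases Nat.eq_zero_or_pos n with rfl | hn
    · simp [Ht, Nat.choose_eq_zero_of_lt (show 0 < j + 1 by omega)]
    have hn1 : n - 1 + 1 = n := by omega
    have key : n * Nat.choose (n-1) j = Nat.choose n (j+1) * (j+1) := by
      have := Nat.add_one_mul_choose_eq (n-1) j
      rwa [hn1] at this
    have hfac : ((j+1).factorial : ℂ) * (Nat.choose n (j+1) : ℂ)
        = (n : ℂ) * (j.factorial : ℂ) * ((n-1).choose j : ℂ) := by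
      have hc := congrArg (Nat.cast (R := ℂ)) key
      push_cast at hc
      rw [Nat.factorial_succ]
      push_cast
      linear_combination (j.factorial : ℂ) * hc.symm
    have e1 : m + 1 - (j+1) = m - j := by omega
    have e3 : n - (j+1) = n - 1 - j := by omega
    have hch : (Nat.choose (m+1) (j+1) : ℂ)
        = (Nat.choose m j : ℂ) + (Nat.choose m (j+1) : ℂ) := by
      rw [← Nat.cast_add, Nat.choose_succ_succ]
    rcases Nat.lt_or_ge j m with hjm | hjm
    · have e2 : z ^ (m - j) = z * z ^ (m - (j+1)) := by
        rw [← pow_succ']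
        congr 1
        omega
      simp only [Ht, e1, e3, hch, pow_succ]
      linear_combination ((-1:ℂ)^j * (-1) * (Nat.choose m j : ℂ) * z^(m-j)
          * (starRingEnd ℂ z)^(n-1-j)) * hfac
        + ((-1:ℂ)^j * (-1) * ((j+1).factorial : ℂ) * (Nat.choose m (j+1) : ℂ)
          * (Nat.choose n (j+1) : ℂ) * (starRingEnd ℂ z)^(n-1-j)) * e2
    · have h0 : Nat.choose m (j+1) = 0 := Nat.choose_eq_zero_of_lt (by omega)
      have e4 : m - (j+1) = 0 := by omega
      have e5 : m - j = 0 := by omega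
      simp only [Ht, e1, e3, e4, e5, hch, h0, pow_succ, pow_zero]
      linear_combination ((-1:ℂ)^j * (-1) * (Nat.choose m j : ℂ)
          * (starRingEnd ℂ z)^(n-1-j)) * hfac
  have hsum : ∑ j ∈ Finset.range N, Ht (m+1) n (j+1) z
      = ∑ j ∈ Finset.range N, (z * Ht m n (j+1) z - (n:ℂ) * Ht m (n-1) j z) :=
    Finset.sum_congr rfl (fun j _ => hterm j)
  rw [hsum, Finset.sum_sub_distrib, ← Finset.mul_sum, ← Finset.mul_sum, hzero, hCN]
  ring

lemma Hc_symm {z : ℂ} (hz : starRingEnd ℂ z = z) (m n : ℕ) : Hc m n z = Hc n m z := by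
  rw [Hc, Hc, Nat.min_comm]
  refine Finset.sum_congr rfl fun k _ => ?_
  rw [hz]
  ring

lemma Hc_rec2 {z : ℂ} (hz : starRingEnd ℂ z = z) (m n : ℕ) :
    Hc m (n+1) z = z * Hc m n z - m * Hc (m-1) n z := by
  rw [Hc_symm hz m (n+1), Hc_rec1 n m z, Hc_symm hz n m, Hc_symm hz n (m-1)]

lemma Iint00 (t : ℝ) : Iint 0 0 t = Real.sqrt Real.pi := by
  have h := integral_gaussian 1
  simp only [one_mul, neg_mul, div_one] at h
  rw [Iint]
  simp only [show HP 0 = 1 from rfl, eval_one, one_mul]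
  exact h

lemma hzt (t : ℝ) : starRingEnd ℂ ((t:ℂ)/(Real.sqrt 2 : ℂ)) = (t:ℂ)/(Real.sqrt 2 : ℂ) := by
  rw [map_div₀, Complex.conj_ofReal, Complex.conj_ofReal]

lemma Hc00 (z : ℂ) : Hc 0 0 z = 1 := by simp [Hc]

lemma sqrt2C : ((Real.sqrt 2 : ℝ) : ℂ) * ((Real.sqrt 2 : ℝ) : ℂ) = 2 := by
  rw [← Complex.ofReal_mul, Real.mul_self_sqrt (by norm_num)]
  norm_num

lemma sqrt2_mul_z (t : ℝ) :
    ((Real.sqrt 2 : ℝ) : ℂ) * ((t:ℂ)/(Real.sqrt 2 : ℂ)) = (t : ℂ) := by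
  have h : ((Real.sqrt 2 : ℝ) : ℂ) ≠ 0 := by
    simpa using Real.sqrt_ne_zero'.mpr (by norm_num : (0:ℝ) < 2)
  rw [mul_comm, div_mul_cancel₀ _ h]

lemma pow_half_succ (m n : ℕ) :
    (2:ℝ) ^ (((m:ℝ)+1+n)/2) = Real.sqrt 2 * (2:ℝ) ^ (((m:ℝ)+n)/2) := by
  rw [show ((m:ℝ)+1+n)/2 = (1:ℝ)/2 + ((m:ℝ)+n)/2 by ring,
    Real.rpow_add (by norm_num)]
  rw [show ((2:ℝ)^((1:ℝ)/2)) = Real.sqrt 2 from (Real.sqrt_eq_rpow 2).symm]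

lemma sqrt2_ne : ((Real.sqrt 2 : ℝ) : ℂ) ≠ 0 := by
  simpa using Real.sqrt_ne_zero'.mpr (by norm_num : (0:ℝ) < 2)

lemma sqrt2_inv : ((Real.sqrt 2:ℝ):ℂ) * (((Real.sqrt 2:ℝ):ℂ))⁻¹ = 1 :=
  mul_inv_cancel₀ sqrt2_ne

lemma pow_half (s : ℝ) : (2:ℝ) ^ ((s+1)/2) = Real.sqrt 2 * (2:ℝ) ^ (s/2) := by
  rw [show (s+1)/2 = (1:ℝ)/2 + s/2 by ring, Real.rpow_add (by norm_num)]
  rw [show ((2:ℝ)^((1:ℝ)/2)) = Real.sqrt 2 from (Real.sqrt_eq_rpow 2).symm]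

lemma main_aux : ∀ N m n : ℕ, m + n = N → ∀ t : ℝ,
    ((Iint m n t : ℝ) : ℂ) = (-1 : ℂ)^n * (Real.sqrt Real.pi : ℂ)
      * (((2:ℝ) ^ (((m:ℝ)+(n:ℝ))/2) : ℝ) : ℂ) * Hc m n ((t:ℂ)/(Real.sqrt 2:ℂ)) := by
  intro N
  induction N using Nat.strong_induction_on with
  | _ N ih =>
  intro m n hmn t
  match m, n with
  | 0, 0 =>
    rw [Iint00, Hc00]
    norm_num
  | (m+1), n =>
    have IH1 := ih (m+n) (by omega) m n rfl t
    have IH2 := ih (m+(n-1)) (by omega) m (n-1) rfl t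
    have h1 : ((Iint (m+1) n t : ℝ) : ℂ)
        = (t:ℂ) * ((Iint m n t : ℝ) : ℂ) + 2*(n:ℂ) * ((Iint m (n-1) t : ℝ) : ℂ) := by
      rw [rec1 m n t]; push_cast; ring
    rw [h1, IH1, IH2, Hc_rec1 m n _]
    have hA : (((2:ℝ)^(((m:ℝ)+1+(n:ℝ))/2):ℝ):ℂ)
        = ((Real.sqrt 2 : ℝ):ℂ) * (((2:ℝ)^(((m:ℝ)+(n:ℝ))/2):ℝ):ℂ) := by
      rw [show ((m:ℝ)+1+(n:ℝ))/2 = (((m:ℝ)+(n:ℝ))+1)/2 by ring, pow_half]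
      push_cast; ring
    have hmc : ((((m:ℕ)+1:ℕ):ℝ):ℂ) = (m:ℂ)+1 := by push_cast; ring
    cases n with
    | zero =>
      simp only [Nat.cast_zero, mul_zero, zero_mul, add_zero, sub_zero, pow_zero, one_mul,
        CharP.cast_eq_zero]
      push_cast
      have hA' : (((2:ℝ)^(((m:ℝ)+1)/2):ℝ):ℂ)
          = ((Real.sqrt 2 : ℝ):ℂ) * (((2:ℝ)^((m:ℝ)/2):ℝ):ℂ) := by
        rw [show ((m:ℝ)+1)/2 = ((m:ℝ)+1)/2 by ring, pow_half]
        push_cast; ring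
      rw [hA']
      linear_combination (-(t:ℂ) * ((Real.sqrt Real.pi:ℝ):ℂ) * (((2:ℝ)^((m:ℝ)/2):ℝ):ℂ)
        * Hc m 0 ((t:ℂ)/(Real.sqrt 2:ℂ))) * sqrt2_inv
    | succ n' =>
      have hB : (((2:ℝ)^(((m:ℝ)+((n':ℝ)+1))/2):ℝ):ℂ)
          = ((Real.sqrt 2 : ℝ):ℂ) * (((2:ℝ)^(((m:ℝ)+(n':ℝ))/2):ℝ):ℂ) := by
        rw [show ((m:ℝ)+((n':ℝ)+1))/2 = (((m:ℝ)+(n':ℝ))+1)/2 by ring, pow_half]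
        push_cast; ring
      push_cast
      have hA2 : (((2:ℝ)^(((m:ℝ)+1+((n':ℝ)+1))/2):ℝ):ℂ)
          = ((Real.sqrt 2:ℝ):ℂ) * (((2:ℝ)^(((m:ℝ)+((n':ℝ)+1))/2):ℝ):ℂ) := by
        rw [show ((m:ℝ)+1+((n':ℝ)+1))/2 = (((m:ℝ)+((n':ℝ)+1))+1)/2 by ring, pow_half]
        push_cast; ring
      rw [hA2, hB]
      linear_combination ((-1:ℂ)^n' * ((Real.sqrt Real.pi:ℝ):ℂ)
          * (((2:ℝ)^(((m:ℝ)+(n':ℝ))/2):ℝ):ℂ) * (t:ℂ)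
          * Hc m (n'+1) ((t:ℂ)/(Real.sqrt 2:ℂ)) * ((Real.sqrt 2:ℝ):ℂ)) * sqrt2_inv
        + (-((-1:ℂ)^n' * ((Real.sqrt Real.pi:ℝ):ℂ)
          * (((2:ℝ)^(((m:ℝ)+(n':ℝ))/2):ℝ):ℂ) * ((n':ℂ)+1)
          * Hc m n' ((t:ℂ)/(Real.sqrt 2:ℂ)))) * sqrt2C
  | 0, (n+1) =>
    have IH1 := ih n (by omega) 0 n (by omega) t
    have h1 : ((Iint 0 (n+1) t : ℝ) : ℂ) = -(t:ℂ) * ((Iint 0 n t : ℝ) : ℂ) := by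
      rw [rec2 0 n t]; push_cast; ring
    rw [h1, IH1, Hc_rec2 (hzt t) 0 n]
    have hA : (((2:ℝ)^(((0:ℝ)+((n:ℝ)+1))/2):ℝ):ℂ)
        = ((Real.sqrt 2 : ℝ):ℂ) * (((2:ℝ)^(((0:ℝ)+(n:ℝ))/2):ℝ):ℂ) := by
      rw [show ((0:ℝ)+((n:ℝ)+1))/2 = (((0:ℝ)+(n:ℝ))+1)/2 by ring, pow_half]
      push_cast; ring
    push_cast
    rw [hA]
    linear_combination ((t:ℂ) * (-1:ℂ)^n * ((Real.sqrt Real.pi:ℝ):ℂ)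
      * (((2:ℝ)^((0+(n:ℝ))/2):ℝ):ℂ) * Hc 0 n ((t:ℂ)/(Real.sqrt 2:ℂ))) * sqrt2_inv

lemma Hphys_eq (k : ℕ) (x : ℝ) : Hphys k x = (HP k).eval x := by
  rw [Hphys, iter_gauss_eq]
  have h1 : ((-1:ℝ)^k)*((-1:ℝ)^k) = 1 := by
    rw [← pow_add]
    exact Even.neg_one_pow ⟨k, rfl⟩
  have h2 : Real.exp (x^2) * Real.exp (-x^2) = 1 := by
    rw [← Real.exp_add]
    simp
  calc (-1:ℝ)^k * Real.exp (x^2) * ((-1:ℝ)^k * Real.exp (-x^2) * (HP k).eval x)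
      = (((-1:ℝ)^k)*((-1:ℝ)^k)) * (Real.exp (x^2) * Real.exp (-x^2)) * (HP k).eval x := by ring
    _ = (HP k).eval x := by rw [h1, h2]; ring

end Aux

theorem hermite_shifted_integral (m n : ℕ) (t : ℝ) :
    ((∫ y : ℝ, Hphys m (y + t/2) * Hphys n (y - t/2) * Real.exp (-y^2) : ℝ) : ℂ)
      = (-1 : ℂ)^n * (Real.sqrt Real.pi : ℂ) * (((2 : ℝ) ^ (((m : ℝ) + n) / 2) : ℝ) : ℂ)
          * Hc m n ((t : ℂ) / (Real.sqrt 2 : ℂ)) := by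
  have hint : (∫ y : ℝ, Hphys m (y + t/2) * Hphys n (y - t/2) * Real.exp (-y^2) : ℝ)
      = Iint m n t := by
    rw [Iint]
    congr 1
    funext y
    rw [Hphys_eq, Hphys_eq]
  rw [hint]
  exact main_aux (m+n) m n rfl t
end

section
/- Mehler's formula: for real λ with |λ| < 1 and all real x, y, ∑_{m=0}^∞ (λ^m / (2^m m!)) h_m(x) h_m(y) = (1-λ²)^{-1/2} exp(-((1+λ²)/(2(1-λ²)))(x²+y²) + (2λ/(1-λ²)) xy), where h_m(x) = e^{-x²/2} H_m(x). -/
open MeasureTheory Complex Real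

/-!
Writing `e^{-x²}` as the Fourier integral `π^{-1/2} ∫ e^{-s² + 2isx} ds` and differentiating under
the integral sign gives `H_m(x) = π^{-1/2} e^{x²} ∫ (-2is)^m e^{-s² + 2isx} ds`. The `m`-th Mehler
summand is then a double integral whose integrand carries the factor `(-2λst)^m / m!`; summing under
the integral (dominated by `e^{2|λ||st| - s² - t²} ≤ e^{-(1-|λ|)(s² + t²)}`) produces `e^{-2λst}`,
and the resulting Gaussian integral is evaluated by integrating out `t` and then `s`.
-/

open scoped Nat

lemma ofReal_cpow_one_half {r : ℝ} (hr : 0 ≤ r) : (r : ℂ) ^ (1 / 2 : ℂ) = √r := by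
  rw [Real.sqrt_eq_rpow, ofReal_cpow hr]
  norm_num

lemma integral_cexp_neg_sq_add_mul (z : ℂ) :
    ∫ t : ℝ, cexp (-(t : ℂ) ^ 2 + z * t) = √π * cexp (z ^ 2 / 4) := by
  have h := integral_cexp_quadratic (b := -1) (by simp) z 0
  simp only [neg_neg, div_one, ofReal_cpow_one_half pi_pos.le, add_zero, neg_one_mul] at h
  rw [h]
  congr 2
  ring

noncomputable def modulatedGaussian (x s : ℝ) : ℂ := cexp (-(s : ℂ) ^ 2 + 2 * I * s * x)

@[fun_prop]
lemma Continuous.modulatedGaussian {α : Type*} [TopologicalSpace α] {f g : α → ℝ}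
    (hf : Continuous f) (hg : Continuous g) :
    Continuous fun a ↦ modulatedGaussian (f a) (g a) := by
  unfold _root_.modulatedGaussian
  fun_prop

lemma norm_modulatedGaussian (x s : ℝ) : ‖modulatedGaussian x s‖ = rexp (-s ^ 2) := by
  rw [modulatedGaussian, norm_exp]
  simp [← ofReal_pow]

lemma integral_modulatedGaussian (x : ℝ) : ∫ s, modulatedGaussian x s = √π * rexp (-x ^ 2) := by
  simp only [modulatedGaussian, mul_right_comm _ _ (x : ℂ), integral_cexp_neg_sq_add_mul]
  push_cast
  congr 2
  ring_nf
  simp [I_sq]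

lemma integrable_mul_pow_mul_modulatedGaussian (c : ℂ) (n : ℕ) (x : ℝ) :
    Integrable fun s : ℝ ↦ (c * s) ^ n * modulatedGaussian x s := by
  have h := integrable_rpow_mul_exp_neg_mul_sq one_pos (neg_one_lt_zero.trans_le n.cast_nonneg)
  simp only [rpow_natCast, neg_mul, one_mul] at h
  refine (h.norm.const_mul (‖c‖ ^ n)).mono' (by fun_prop) (.of_forall fun s ↦ ?_)
  simp [norm_modulatedGaussian, mul_pow, mul_assoc]

lemma hasDerivAt_modulatedGaussian (x s : ℝ) :
    HasDerivAt (modulatedGaussian · s) (2 * I * s * modulatedGaussian x s) x := by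
  have h := ((ofRealCLM.hasDerivAt (x := x)).const_mul (2 * I * s)).const_add (-(s : ℂ) ^ 2)
  simpa [modulatedGaussian, mul_comm] using h.cexp

lemma hasDerivAt_integral_mul_pow_mul_modulatedGaussian (n : ℕ) (x : ℝ) :
    HasDerivAt (fun x ↦ ∫ s : ℝ, (2 * I * s) ^ n * modulatedGaussian x s)
      (∫ s : ℝ, (2 * I * s) ^ (n + 1) * modulatedGaussian x s) x := by
  refine (hasDerivAt_integral_of_dominated_loc_of_deriv_le
    (F := fun x s ↦ (2 * I * s) ^ n * modulatedGaussian x s)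
    (F' := fun x s ↦ (2 * I * s) ^ (n + 1) * modulatedGaussian x s)
    (bound := fun s ↦ ‖(2 * I * s) ^ (n + 1) * modulatedGaussian 0 s‖)
    (Metric.ball_mem_nhds x one_pos)
    (.of_forall fun x ↦ by fun_prop) (integrable_mul_pow_mul_modulatedGaussian _ n x)
    (by fun_prop) (.of_forall fun s x' _ ↦ ?_)
    (integrable_mul_pow_mul_modulatedGaussian _ (n + 1) 0).norm
    (.of_forall fun s x' _ ↦ ?_)).2
  · simp [norm_modulatedGaussian]
  · exact ((hasDerivAt_modulatedGaussian x' s).const_mul ((2 * I * s) ^ n)).congr_deriv (by ring)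

lemma integral_mul_pow_mul_modulatedGaussian_eq_iteratedDeriv (n : ℕ) (x : ℝ) :
    ∫ s : ℝ, (2 * I * s) ^ n * modulatedGaussian x s
      = √π * iteratedDeriv n (fun t ↦ rexp (-t ^ 2)) x := by
  induction n generalizing x with
  | zero => simp [integral_modulatedGaussian]
  | succ n ih =>
    have hdiff : Differentiable ℝ (iteratedDeriv n fun t ↦ rexp (-t ^ 2)) :=
      (ContDiff.differentiable_iteratedDeriv n (by fun_prop) (WithTop.coe_lt_top _))
    have h := (hdiff x).hasDerivAt.ofReal_comp.const_mul (√π : ℂ)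
    rw [← funext ih] at h
    rw [(hasDerivAt_integral_mul_pow_mul_modulatedGaussian n x).unique h, iteratedDeriv_succ]

lemma hFun_eq_integral (n : ℕ) (x : ℝ) :
    (hFun n x : ℂ) = rexp (x ^ 2 / 2) / √π * ∫ s : ℝ, (-2 * I * s) ^ n * modulatedGaussian x s := by
  have hneg : ∀ s : ℝ, (-2 * I * s) ^ n * modulatedGaussian x s
      = (-1) ^ n * ((2 * I * s) ^ n * modulatedGaussian x s) := fun s ↦ by
    rw [← mul_assoc, ← mul_pow]; ring_nf
  simp only [hneg, integral_const_mul, integral_mul_pow_mul_modulatedGaussian_eq_iteratedDeriv, hFun,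
    Hphys]
  have hexp : cexp (-x ^ 2 / 2) * cexp (x ^ 2) = cexp (x ^ 2 / 2) := by
    rw [← Complex.exp_add]; ring_nf
  push_cast
  rw [← hexp]
  field_simp

lemma ofReal_mehler_summand_eq_integral (l x y : ℝ) (n : ℕ) :
    ((l ^ n / (2 ^ n * (n ! : ℝ)) * hFun n x * hFun n y : ℝ) : ℂ)
      = rexp ((x ^ 2 + y ^ 2) / 2) / π *
        ∫ p : ℝ × ℝ, (-2 * l * p.1 * p.2) ^ n / n ! *
          (modulatedGaussian x p.1 * modulatedGaussian y p.2) := by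
  have hsplit : ∀ p : ℝ × ℝ,
      (-2 * l * p.1 * p.2 : ℂ) ^ n / n ! * (modulatedGaussian x p.1 * modulatedGaussian y p.2)
        = l ^ n / (2 ^ n * n !) * (((-2 * I * p.1) ^ n * modulatedGaussian x p.1)
          * ((-2 * I * p.2) ^ n * modulatedGaussian y p.2)) := fun p ↦ by
    have hI : (-2 * I * p.1) * (-2 * I * p.2) = -4 * p.1 * p.2 := by
      linear_combination (4 * (p.1 : ℂ) * p.2) * I_sq
    rw [mul_mul_mul_comm, ← mul_pow, hI,
      show (-2 * l * p.1 * p.2 : ℂ) = l / 2 * (-4 * p.1 * p.2) by ring, mul_pow, div_pow]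
    ring
  simp only [hsplit, integral_const_mul, Measure.volume_eq_prod, integral_prod_mul (L := ℂ)
    (fun s ↦ (-2 * I * s) ^ n * modulatedGaussian x s)
    (fun t ↦ (-2 * I * t) ^ n * modulatedGaussian y t)]
  have hpi : (π : ℂ) = √π * √π := by rw [← ofReal_mul, mul_self_sqrt pi_nonneg]
  have hexp : cexp ((x ^ 2 + y ^ 2) / 2) = cexp (x ^ 2 / 2) * cexp (y ^ 2 / 2) := by
    rw [← Complex.exp_add]; ring_nf
  push_cast
  rw [hFun_eq_integral, hFun_eq_integral, hpi]
  push_cast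
  rw [hexp]
  ring

lemma integrable_exp_mul_abs_mul_mul_exp_neg_sq {a : ℝ} (ha₀ : 0 ≤ a) (ha : a < 2) :
    Integrable fun p : ℝ × ℝ ↦ rexp (a * |p.1 * p.2|) * (rexp (-p.1 ^ 2) * rexp (-p.2 ^ 2)) := by
  have hb : 0 < 1 - a / 2 := by linarith
  have hdom : Integrable fun p : ℝ × ℝ ↦
      rexp (-(1 - a / 2) * p.1 ^ 2) * rexp (-(1 - a / 2) * p.2 ^ 2) := by
    rw [Measure.volume_eq_prod]
    exact (integrable_exp_neg_mul_sq hb).mul_prod (integrable_exp_neg_mul_sq hb)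
  refine hdom.mono' (by fun_prop) (.of_forall fun p ↦ ?_)
  have hamgm : 2 * |p.1 * p.2| ≤ p.1 ^ 2 + p.2 ^ 2 := by
    simpa [abs_mul, mul_assoc] using two_mul_le_add_sq |p.1| |p.2|
  rw [norm_of_nonneg (by positivity), ← Real.exp_add, ← Real.exp_add, ← Real.exp_add]
  exact Real.exp_le_exp.mpr (by nlinarith)

lemma integrable_cexp_mul_mul_modulatedGaussian {c : ℂ} (hc : ‖c‖ < 2) (x y : ℝ) :
    Integrable fun p : ℝ × ℝ ↦
      cexp (c * p.1 * p.2) * (modulatedGaussian x p.1 * modulatedGaussian y p.2) := by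
  refine (integrable_exp_mul_abs_mul_mul_exp_neg_sq (norm_nonneg c) hc).mono' (by fun_prop)
    (.of_forall fun p ↦ ?_)
  rw [norm_mul, norm_mul, norm_modulatedGaussian, norm_modulatedGaussian, norm_exp]
  gcongr
  calc (c * p.1 * p.2).re ≤ ‖c * p.1 * p.2‖ := re_le_norm _
    _ = ‖c‖ * |p.1 * p.2| := by simp [mul_assoc]

lemma hasSum_integral_pow_mul_modulatedGaussian {c : ℂ} (hc : ‖c‖ < 2) (x y : ℝ) :
    HasSum (fun n ↦ ∫ p : ℝ × ℝ,
        (c * p.1 * p.2) ^ n / n ! * (modulatedGaussian x p.1 * modulatedGaussian y p.2))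
      (∫ p : ℝ × ℝ,
        cexp (c * p.1 * p.2) * (modulatedGaussian x p.1 * modulatedGaussian y p.2)) := by
  refine hasSum_integral_of_dominated_convergence
    (fun n p ↦ (‖c‖ * |p.1 * p.2|) ^ n / n ! * (rexp (-p.1 ^ 2) * rexp (-p.2 ^ 2)))
    (fun n ↦ by fun_prop) (fun n ↦ .of_forall fun p ↦ ?_)
    (.of_forall fun p ↦ (Real.summable_pow_div_factorial _).mul_right _) ?_
    (.of_forall fun p ↦ ?_)
  · simp [norm_modulatedGaussian, mul_assoc]
  · have hexp (z : ℝ) : ∑' n : ℕ, z ^ n / n ! = rexp z := by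
      rw [Real.exp_eq_exp_ℝ, NormedSpace.exp_eq_tsum_div]
    simp_rw [tsum_mul_right, hexp]
    exact integrable_exp_mul_abs_mul_mul_exp_neg_sq (norm_nonneg c) hc
  · simpa [Complex.exp_eq_exp_ℂ] using
      (NormedSpace.expSeries_div_hasSum_exp (c * p.1 * p.2)).mul_right _

lemma integral_cexp_mul_mul_modulatedGaussian {l : ℝ} (hl : |l| < 1) (x y : ℝ) :
    ∫ p : ℝ × ℝ, cexp (-2 * l * p.1 * p.2) * (modulatedGaussian x p.1 * modulatedGaussian y p.2)
      = π / √(1 - l ^ 2) * rexp ((2 * l * x * y - x ^ 2 - y ^ 2) / (1 - l ^ 2)) := by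
  have hl2 : 0 < 1 - l ^ 2 := by nlinarith [abs_lt.mp hl]
  have hinner (s : ℝ) :
      ∫ t : ℝ, cexp (-2 * l * s * t) * (modulatedGaussian x s * modulatedGaussian y t)
      = √π * cexp ((l ^ 2 - 1 : ℝ) * s ^ 2 + 2 * I * (x - l * y) * s + -y ^ 2) := by
    have hsplit (t : ℝ) : cexp (-2 * l * s * t) * (modulatedGaussian x s * modulatedGaussian y t)
        = modulatedGaussian x s * cexp (-(t : ℂ) ^ 2 + (2 * I * y - 2 * l * s) * t) := by
      simp only [modulatedGaussian]
      rw [mul_left_comm, ← Complex.exp_add]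
      congr 2
      ring
    simp_rw [hsplit, integral_const_mul, integral_cexp_neg_sq_add_mul, modulatedGaussian]
    rw [mul_left_comm, ← Complex.exp_add]
    congr 2
    push_cast
    linear_combination (y : ℂ) ^ 2 * I_sq
  rw [Measure.volume_eq_prod, integral_prod _ (by
    simpa [Measure.volume_eq_prod] using
      integrable_cexp_mul_mul_modulatedGaussian (c := -2 * l) (by simp; linarith) x y)]
  simp only [hinner, integral_const_mul]
  rw [integral_cexp_quadratic (by rw [ofReal_re]; linarith) _ _]
  have hexponent : -(y : ℂ) ^ 2 - (2 * I * (x - l * y)) ^ 2 / (4 * (l ^ 2 - 1 : ℝ))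
      = ((2 * l * x * y - x ^ 2 - y ^ 2) / (1 - l ^ 2) : ℝ) := by
    have h₁ : (1 : ℂ) - l ^ 2 ≠ 0 := by exact_mod_cast hl2.ne'
    have h₂ : (l : ℂ) ^ 2 - 1 ≠ 0 := by exact_mod_cast sub_ne_zero.mpr (sub_pos.mp hl2).ne
    have hsq : (2 * I * (x - l * y)) ^ 2 = -4 * ((x : ℂ) - l * y) ^ 2 := by
      linear_combination (4 * ((x : ℂ) - l * y) ^ 2) * I_sq
    push_cast
    rw [hsq]
    field_simp
    ring
  rw [show (π : ℂ) / -(l ^ 2 - 1 : ℝ) = (π / (1 - l ^ 2) : ℝ) by push_cast; ring,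
    ofReal_cpow_one_half (by positivity), hexponent, ← ofReal_exp, sqrt_div pi_nonneg]
  push_cast
  rw [← mul_assoc, mul_div_assoc', ← ofReal_mul, mul_self_sqrt pi_nonneg]

theorem mehler_formula (l : ℝ) (hl : |l| < 1) (x y : ℝ) :
    ∑' m : ℕ, l^m / (2^m * (Nat.factorial m : ℝ)) * hFun m x * hFun m y
      = (Real.sqrt (1 - l^2))⁻¹ *
          Real.exp (-((1 + l^2) / (2 * (1 - l^2))) * (x^2 + y^2) + (2 * l / (1 - l^2)) * x * y) := by
  have hl2 : 0 < 1 - l ^ 2 := by nlinarith [abs_lt.mp hl]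
  have hsum := (hasSum_integral_pow_mul_modulatedGaussian (c := -2 * l)
    (by simpa using (mul_lt_mul_iff_right₀ two_pos).mpr hl) x y).mul_left
    ((rexp ((x ^ 2 + y ^ 2) / 2) : ℂ) / π)
  simp_rw [← ofReal_mehler_summand_eq_integral, integral_cexp_mul_mul_modulatedGaussian hl] at hsum
  have hvalue : rexp ((x ^ 2 + y ^ 2) / 2) / π
        * (π / √(1 - l ^ 2) * rexp ((2 * l * x * y - x ^ 2 - y ^ 2) / (1 - l ^ 2)))
      = (√(1 - l ^ 2))⁻¹
        * rexp (-((1 + l ^ 2) / (2 * (1 - l ^ 2))) * (x ^ 2 + y ^ 2)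
          + 2 * l / (1 - l ^ 2) * x * y) := by
    have hexp : -((1 + l ^ 2) / (2 * (1 - l ^ 2))) * (x ^ 2 + y ^ 2) + 2 * l / (1 - l ^ 2) * x * y
        = (x ^ 2 + y ^ 2) / 2 + (2 * l * x * y - x ^ 2 - y ^ 2) / (1 - l ^ 2) := by
      field_simp
      ring
    rw [hexp, Real.exp_add]
    field_simp
  rw [← hvalue]
  exact (hasSum_ofReal.mp (by exact_mod_cast hsum)).tsum_eq
end
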